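/- arXiv:1905.06432 — 6 statements merged into one kernel-verified Lean document; each statement's English description precedes it below -/
import Mathlib

section
/- Let (X, ▷) be a rack on a finite set X and let f : X → X be a Legendrian map on (X, ▷). Then f is an automorphism of the rack (X, ▷); that is, f is a bijection and f(x ▷ y) = f(x) ▷ f(y) for all x, y ∈ X. -/
/-- A Legendrian map on a finite rack `(X, ▷)` is an automorphism of the rack:
it is bijective and satisfies `f (x ▷ y) = f x ▷ f y`. -/
theorem legendrian_map_is_automorphism {X : Type*} [Finite X] (op : X → X → X)
    (rack_bij : ∀ y : X, Function.Bijective (fun x => op x y))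
    (rack_dist : ∀ x y z : X, op (op x y) z = op (op x z) (op y z))
    (f : X → X)
    (legI : ∀ x : X, f (f (op x x)) = x ∧ op (f (f x)) x = x)
    (legII : ∀ x y : X, f (op x y) = op (f x) y)
    (legIII : ∀ x y : X, op x (f y) = op x y) :
    Function.Bijective f ∧ ∀ x y : X, f (op x y) = op (f x) (f y) := by
  have hsurj : Function.Surjective f := fun x => ⟨f (op x x), (legI x).1⟩
  have hinj : Function.Injective f := Finite.injective_iff_surjective.2 hsurj
  exact ⟨⟨hinj, hsurj⟩, fun x y => by rw [legII, legIII]⟩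
end

section
/- Let (X, ▷) be a rack and let f : X → X be a Legendrian map on (X, ▷). Then f is injective: for all x, y ∈ X, if f(x) = f(y) then x = y. -/
/-- A Legendrian map on a rack `(X, ▷)` is injective. -/
theorem legendrian_map_injective {X : Type*} (op : X → X → X)
    (rack_bij : ∀ y : X, Function.Bijective (fun x => op x y))
    (rack_dist : ∀ x y z : X, op (op x y) z = op (op x z) (op y z))
    (f : X → X)
    (legI : ∀ x : X, f (f (op x x)) = x ∧ op (f (f x)) x = x)
    (legII : ∀ x y : X, f (op x y) = op (f x) y)
    (legIII : ∀ x y : X, op x (f y) = op x y) :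
    ∀ x y : X, f x = f y → x = y := by
  intro x y h
  have hzy : ∀ z, op z x = op z y := fun z => by
    rw [← legIII z x, h, legIII]
  calc x = op (f (f x)) x := (legI x).2.symm
    _ = op (f (f y)) y := by rw [h, hzy]
    _ = y := (legI y).2
end

section
/- Let R be a commutative ring, let t, s, a ∈ R with t a unit and s·s = (1 − t)·s, let X be an R-module, and let b ∈ X. Define x ▷ y = t•x + s•y for x, y ∈ X and f(x) = a•x + b. If a²(t + s) = 1, (1 − a)s = 0, (a + 1)•b = 0, (1 − t)•b = 0, and s•b = 0 (in R resp. X), then (X, ▷) is a rack and f is a Legendrian map on (X, ▷). -/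
/-- Sufficiency in the characterization of affine Legendrian structures on `(t,s)`-racks:
if `a²(t+s) = 1`, `(1−a)s = 0`, `(a+1)•b = 0`, `(1−t)•b = 0` and `s•b = 0`, then
`x ▷ y = t•x + s•y` is a rack operation and `f(x) = a•x + b` is a Legendrian map on it. -/
theorem ts_rack_affine_legendrian {R : Type*} [CommRing R]
    {X : Type*} [AddCommGroup X] [Module R X]
    (t s a : R) (ht : IsUnit t) (hts : s * s = (1 - t) * s) (b : X)
    (h1 : a ^ 2 * (t + s) = 1) (h2 : (1 - a) * s = 0)
    (h3 : (a + 1) • b = 0) (h4 : (1 - t) • b = 0) (h5 : s • b = 0) :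
    let op : X → X → X := fun x y => t • x + s • y
    let f : X → X := fun x => a • x + b
    ((∀ y : X, Function.Bijective (fun x => op x y)) ∧
     (∀ x y z : X, op (op x y) z = op (op x z) (op y z))) ∧
    ((∀ x : X, f (f (op x x)) = x ∧ op (f (f x)) x = x) ∧
     (∀ x y : X, f (op x y) = op (f x) y) ∧
     (∀ x y : X, op x (f y) = op x y)) := by
  intro op f
  obtain ⟨u, hu⟩ := ht
  have ha2s : a ^ 2 * s = s := by linear_combination (-(a + 1)) * h2
  refine ⟨⟨fun y => ?_, fun x y z => ?_⟩, ⟨fun x => ⟨?_, ?_⟩, fun x y => ?_, fun x y => ?_⟩⟩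
  · refine ⟨fun x₁ x₂ h => ?_, fun z => ⟨(↑u⁻¹ : R) • (z - s • y), ?_⟩⟩
    · have h' : t • x₁ = t • x₂ := by
        have : t • x₁ + s • y = t • x₂ + s • y := h
        exact add_right_cancel this
      calc x₁ = ((↑u⁻¹ : R) * t) • x₁ := by rw [← hu, Units.inv_mul, one_smul]
      _ = ((↑u⁻¹ : R) * t) • x₂ := by rw [mul_smul, h', ← mul_smul]
      _ = x₂ := by rw [← hu, Units.inv_mul, one_smul]
    · show t • ((↑u⁻¹ : R) • (z - s • y)) + s • y = z
      rw [smul_smul, ← hu, Units.mul_inv, one_smul, sub_add_cancel]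
  · show t • (t • x + s • y) + s • z = t • (t • x + s • z) + s • (t • y + s • z)
    have e : t • (t • x + s • z) + s • (t • y + s • z) =
        t • (t • x + s • y) + s • z + ((s * s - (1 - t) * s) • z) := by module
    rw [e, hts, sub_self, zero_smul, add_zero]
  · show a • (a • (t • x + s • x) + b) + b = x
    have e : a • (a • (t • x + s • x) + b) + b =
        (a ^ 2 * (t + s)) • x + (a + 1) • b := by module
    rw [e, h1, h3, one_smul, add_zero]
  · show t • (a • (a • x + b) + b) + s • x = x
    have e : t • (a • (a • x + b) + b) + s • x =
        (a ^ 2 * t + s) • x + (t * (a + 1)) • b := by module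
    have h1' : a ^ 2 * t + s = 1 := by linear_combination h1 - ha2s
    rw [e, h1', mul_smul, h3, smul_zero, one_smul, add_zero]
  · show a • (t • x + s • y) + b = t • (a • x + b) + s • y
    have e : a • (t • x + s • y) + b =
        t • (a • x + b) + s • y + (((a - 1) * s) • y + (1 - t) • b) := by module
    rw [e, show (a - 1) * s = 0 by linear_combination -h2, h4, zero_smul, zero_add, add_zero]
  · show t • x + s • (a • y + b) = t • x + s • y
    have e : t • x + s • (a • y + b) =
        t • x + s • y + (((a - 1) * s) • y + s • b) := by module
    rw [e, show (a - 1) * s = 0 by linear_combination -h2, h5, zero_smul, zero_add, add_zero]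
end

section
/- Let X = ℤ/49ℤ with the operation x ▷ y = 2x. Then (X, ▷) is a rack which is not a quandle (there exists x with x ▷ x ≠ x), the map f(x) = 5x is a Legendrian map on (X, ▷), and f is not an involution (there exists x with f(f(x)) ≠ x). -/
/-- On `ℤ/49ℤ` with operation `x ▷ y = 2x`: this is a rack but not a quandle,
`f(x) = 5x` is a Legendrian map on it, and `f` is not an involution. -/
theorem legendrian_nonquandle_rack_Z49 :
    let op : ZMod 49 → ZMod 49 → ZMod 49 := fun x _ => 2 * x
    let f : ZMod 49 → ZMod 49 := fun x => 5 * x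
    ((∀ y : ZMod 49, Function.Bijective (fun x => op x y)) ∧
     (∀ x y z : ZMod 49, op (op x y) z = op (op x z) (op y z))) ∧
    (∃ x : ZMod 49, op x x ≠ x) ∧
    ((∀ x : ZMod 49, f (f (op x x)) = x ∧ op (f (f x)) x = x) ∧
     (∀ x y : ZMod 49, f (op x y) = op (f x) y) ∧
     (∀ x y : ZMod 49, op x (f y) = op x y)) ∧
    (∃ x : ZMod 49, f (f x) ≠ x) := by
  intro op f
  have h49 : (49 : ZMod 49) = 0 := by decide
  refine ⟨⟨fun y => ?_, fun x y z => by simp [op]⟩,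
    ⟨1, by decide⟩,
    ⟨fun x => ⟨by show 5*(5*(2*x)) = x; linear_combination x * h49,
               by show 2*(5*(5*x)) = x; linear_combination x * h49⟩,
     fun x y => by show 5*(2*x) = 2*(5*x); ring,
     fun x y => rfl⟩,
    ⟨1, by decide⟩⟩
  have : Function.Bijective (fun x : ZMod 49 => 2 * x) := by
    refine ⟨fun a b h => ?_, fun a => ⟨25 * a, ?_⟩⟩
    · have := congrArg (fun t => (25 : ZMod 49) * t) h
      simp only at this
      linear_combination this - a * h49 + b * h49
    · show 2 * (25 * a) = a; linear_combination a * h49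
  exact this
end

section
/- Let X be a set, let σ : X → X be a bijection, and equip X with the constant action rack operation x ▷ y = σ(x). Then a map f : X → X is a Legendrian map on (X, ▷) if and only if f(f(σ(x))) = x for all x ∈ X (i.e., f ∘ f = σ⁻¹). -/
/-- On a constant action rack (`x ▷ y = σ(x)` for a bijection `σ`), a map
`f : X → X` is a Legendrian map if and only if `f(f(σ(x))) = x` for all `x`,
i.e. `f ∘ f = σ⁻¹`. -/
theorem legendrian_on_constant_action_rack_iff {X : Type*}
    (σ : X → X) (hσ : Function.Bijective σ) (f : X → X) :
    let op : X → X → X := fun x _ => σ x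
    ((∀ x : X, f (f (op x x)) = x ∧ op (f (f x)) x = x) ∧
     (∀ x y : X, f (op x y) = op (f x) y) ∧
     (∀ x y : X, op x (f y) = op x y)) ↔
    (∀ x : X, f (f (σ x)) = x) := by
  intro op
  constructor
  · rintro ⟨h1, _, _⟩ x
    exact (h1 x).1
  · intro h
    have hffinj : Function.Injective (fun x => f (f x)) := by
      intro a b hab
      obtain ⟨a', rfl⟩ := hσ.2 a
      obtain ⟨b', rfl⟩ := hσ.2 b
      simp only at hab
      rw [h a', h b'] at hab
      rw [hab]
    refine ⟨fun x => ⟨h x, ?_⟩, fun x y => ?_, fun x y => rfl⟩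
    · obtain ⟨z, rfl⟩ := hσ.2 x
      show σ (f (f (σ z))) = σ z
      rw [h z]
    · show f (σ x) = σ (f x)
      apply hffinj
      show f (f (f (σ x))) = f (f (σ (f x)))
      rw [h (f x), h x]
end

section
/- Let X = {1, 2, 3, 4} with rack operation x ▷ y = σ(x), where σ = (1 2)(3 4), and let f be the permutation sending 1 ↦ 4, 4 ↦ 2, 2 ↦ 3, 3 ↦ 1. Then the system of equations x ▷ y = f²(z), z ▷ x = f(y), u ▷ z = f²(x), v ▷ u = f²(w), w ▷ v = f(u), y ▷ w = f²(v) (the coloring equations of the connected sum K₁ # K₁ of the Legendrian trefoil with itself) has no solution (x, y, z, u, v, w) in X, whereas the system x ▷ y = f²(z), z ▷ x = f(y), u ▷ z = f²(x), v ▷ u = f⁴(w), w ▷ v = f(u), y ▷ w = f²(v) (the coloring equations of K₁ # K₂, where K₂ is the stabilized trefoil) has a solution, for example x = z = u = 1, y = v = 4, w = 3. -/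
/-- On `{1,2,3,4}` (encoded as `Fin 4`, `i` representing `i + 1`) with the constant
action rack `x ▷ y = σ(x)`, `σ = (1 2)(3 4)`, and Legendrian map `f = (1 4 2 3)`:
the coloring equations of `K₁ # K₁` (trefoil connect-sum itself) have no solution,
while the coloring equations of `K₁ # K₂` (trefoil connect-sum stabilized trefoil)
have a solution, e.g. `x = z = u = 1, y = v = 4, w = 3`. -/
theorem connected_sum_colorings :
    let σ : Fin 4 → Fin 4 := ![1, 0, 3, 2]   -- (1 2)(3 4)
    let op : Fin 4 → Fin 4 → Fin 4 := fun x _ => σ x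
    let f : Fin 4 → Fin 4 := ![3, 2, 0, 1]   -- (1 4 2 3)
    ¬(∃ x y z u v w : Fin 4,
        op x y = f (f z) ∧ op z x = f y ∧ op u z = f (f x) ∧
        op v u = f (f w) ∧ op w v = f u ∧ op y w = f (f v)) ∧
    (∃ x y z u v w : Fin 4,
        op x y = f (f z) ∧ op z x = f y ∧ op u z = f (f x) ∧
        op v u = f (f (f (f w))) ∧ op w v = f u ∧ op y w = f (f v)) ∧
    (let x : Fin 4 := 0; let y : Fin 4 := 3; let z : Fin 4 := 0;
     let u : Fin 4 := 0; let v : Fin 4 := 3; let w : Fin 4 := 2;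
     op x y = f (f z) ∧ op z x = f y ∧ op u z = f (f x) ∧
     op v u = f (f (f (f w))) ∧ op w v = f u ∧ op y w = f (f v)) := by
  refine ⟨by decide, ⟨0,3,0,0,3,2, by decide⟩, by decide⟩
end
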